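/- Multiplex influence spread via the LEM: for every multiplex network w on n agents with m layers, every seed set S₀ ⊆ Fin n, and every protocol assignment u, the multiplex influence spread σ_{S₀} — the expected cardinality of the steady-state active set S n of the multiplex LTM over thresholds μ distributed according to the product of uniform measures on [0,1] — equals ∑_{i=1}^{n} r(i), the sum over agents of the probabilities of being U-reachable from S₀ in the multiplex LEM. In particular, taking S₀ = {j}, the multiplex cascade centrality of agent j satisfies C_j = ∑_{i=1}^{n} r(i). -/

import Mathlib

open MeasureTheory

inductive Protocol
  | OR
  | AND
deriving DecidableEq

noncomputable def ltmStep {n m : ℕ} (w : Fin m → Fin n → Fin n → ℝ)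
    (u : Fin n → Protocol) (μ : Fin n → Fin m → ℝ)
    (A : Finset (Fin n)) : Finset (Fin n) :=
  A ∪ Finset.univ.filter fun i =>
    (u i = Protocol.OR ∧ ∃ k, μ i k < ∑ j ∈ A, w k i j) ∨
    (u i = Protocol.AND ∧ ∀ k, μ i k < ∑ j ∈ A, w k i j)

noncomputable def ltmSS {n m : ℕ} (w : Fin m → Fin n → Fin n → ℝ)
    (u : Fin n → Protocol) (S₀ : Finset (Fin n))
    (μ : Fin n → Fin m → ℝ) : Finset (Fin n) :=
  (ltmStep w u μ)^[n] S₀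

noncomputable def thMeasure (n m : ℕ) : Measure (Fin n → Fin m → ℝ) :=
  Measure.pi fun _ => Measure.pi fun _ => volume.restrict (Set.Icc (0:ℝ) 1)

noncomputable def pLTM {n m : ℕ} (w : Fin m → Fin n → Fin n → ℝ)
    (u : Fin n → Protocol) (S₀ : Finset (Fin n)) (i : Fin n) : ℝ :=
  (thMeasure n m {μ | i ∈ ltmSS w u S₀ μ}).toReal

def lemStep {n m : ℕ} (S₀ : Finset (Fin n)) (u : Fin n → Protocol)
    (σ : Fin n → Fin m → Fin n) (A : Finset (Fin n)) : Finset (Fin n) :=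
  S₀ ∪ A ∪ Finset.univ.filter fun i =>
    (u i = Protocol.OR ∧ ∃ k, σ i k ∈ A) ∨
    (u i = Protocol.AND ∧ ∀ k, σ i k ∈ A)

def UReachable {n m : ℕ} (S₀ : Finset (Fin n)) (u : Fin n → Protocol)
    (σ : Fin n → Fin m → Fin n) (i : Fin n) : Prop :=
  i ∈ (lemStep S₀ u σ)^[n] S₀

instance {n m : ℕ} (S₀ : Finset (Fin n)) (u : Fin n → Protocol)
    (σ : Fin n → Fin m → Fin n) (i : Fin n) : Decidable (UReachable S₀ u σ i) := by
  unfold UReachable; infer_instance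

noncomputable def rProb {n m : ℕ} (w : Fin m → Fin n → Fin n → ℝ)
    (S₀ : Finset (Fin n)) (u : Fin n → Protocol) (i : Fin n) : ℝ :=
  ∑ σ : Fin n → Fin m → Fin n,
    if UReachable S₀ u σ i then ∏ a : Fin n, ∏ k : Fin m, w k a (σ a k) else 0

noncomputable def casCen {n m : ℕ} (w : Fin m → Fin n → Fin n → ℝ)
    (u : Fin n → Protocol) (j : Fin n) : ℝ :=
  ∑ i : Fin n, pLTM w u {j} i

noncomputable def pathW (N : ℕ) (i j : Fin N) : ℝ :=
  if j.val = i.val + 1 ∨ i.val = j.val + 1 then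
    (if i.val = 0 ∨ i.val = N - 1 then 1 else 1/2)
  else 0

noncomputable def cycleW (N : ℕ) (i j : Fin N) : ℝ :=
  if (i.val + 1) % N = j.val ∨ (j.val + 1) % N = i.val then 1/2 else 0

noncomputable def permW2 (N : ℕ) (i j : Fin N) : ℝ :=
  if ((i.val + 1) % N = j.val ∨ (j.val + 1) % N = i.val) ∧
      ¬((i.val = N - 2 ∧ j.val = N - 1) ∨ (i.val = N - 1 ∧ j.val = N - 2)) then
    (if i.val = N - 2 ∨ i.val = N - 1 then 1 else 1/2)
  else 0

/-!
Fix a candidate trajectory `T 0 ⊆ T 1 ⊆ ⋯ ⊆ T n`. Whether the LTM follows `T` depends on each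
threshold `μ i k` only through which of the nested half-lines `(-∞, ∑ j ∈ T s, w k i j)`
contain it, and whether the LEM follows `T` depends on each live edge `σ i k` only through which
of the nested sets `T s` contain it. Two nested families of events with the same probabilities
have the same joint law of indicators (induct on the length of the chain), so by independence
over the pairs `(i, k)` both models follow `T` with the same probability. Hence the two
trajectories have the same law, `ℙ_LTM(i) = r(i)`, and the statement follows by linearity of
expectation.
-/

section NestedEvents

variable {α β : Type*}

def hitPattern {ι : Type*} (E : ι → Set α) (x : α) : ι → Prop := fun s => x ∈ E s

section Cons

variable {N : ℕ} {E : Fin (N + 1) → Set α}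

lemma hitPattern_eq_iff_cons (x : α) (b : Fin (N + 1) → Prop) :
    hitPattern E x = b ↔ (x ∈ E 0 ↔ b 0) ∧ hitPattern (E ∘ Fin.succ) x = Fin.tail b := by
  simp only [funext_iff, hitPattern, Fin.forall_fin_succ, Function.comp_apply, Fin.tail,
    eq_iff_iff]

lemma inter_hitPattern_succ_eq (hE : Monotone E) (b : Fin N → Prop) :
    E 0 ∩ {x | hitPattern (E ∘ Fin.succ) x = b} = {x | x ∈ E 0 ∧ ∀ s, b s} := by
  ext x
  simp only [Set.mem_inter_iff, Set.mem_ofPred_eq, funext_iff, hitPattern, Function.comp_apply,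
    eq_iff_iff, and_congr_right_iff]
  exact fun hx => forall_congr' fun s => iff_true_left (hE (Fin.zero_le s.succ) hx)

lemma setOf_hitPattern_eq_of_head (hE : Monotone E) {b : Fin (N + 1) → Prop} (hb : b 0) :
    {x | hitPattern E x = b} = {x | x ∈ E 0 ∧ ∀ s, Fin.tail b s} := by
  simp_rw [← inter_hitPattern_succ_eq hE, hitPattern_eq_iff_cons, hb, iff_true]
  rfl

lemma setOf_hitPattern_eq_of_not_head (hE : Monotone E) {b : Fin (N + 1) → Prop} (hb : ¬ b 0) :
    {x | hitPattern E x = b} =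
      {x | hitPattern (E ∘ Fin.succ) x = Fin.tail b} \ {x | x ∈ E 0 ∧ ∀ s, Fin.tail b s} := by
  simp_rw [← inter_hitPattern_succ_eq hE, hitPattern_eq_iff_cons, hb, iff_false]
  ext x
  simp only [Set.mem_ofPred_eq, Set.mem_sdiff, Set.mem_inter_iff]
  tauto

lemma setOf_head_subset (hE : Monotone E) (b : Fin N → Prop) :
    {x | x ∈ E 0 ∧ ∀ s, b s} ⊆ {x | hitPattern (E ∘ Fin.succ) x = b} :=
  inter_hitPattern_succ_eq hE b ▸ Set.inter_subset_right

end Cons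

variable [MeasurableSpace α] [MeasurableSpace β]

lemma measurable_hitPattern {ι : Type*} {E : ι → Set α} (hE : ∀ s, MeasurableSet (E s)) :
    Measurable (hitPattern E) :=
  measurable_pi_lambda _ fun s => measurableSet_setOfPred.mp (hE s)

theorem measure_hitPattern_eq {μ : Measure α} {ν : Measure β} [IsFiniteMeasure μ]
    [IsFiniteMeasure ν] (huniv : μ Set.univ = ν Set.univ) {N : ℕ} {E : Fin N → Set α}
    {F : Fin N → Set β} (hE : Monotone E) (hF : Monotone F) (hEm : ∀ s, MeasurableSet (E s))
    (hFm : ∀ s, MeasurableSet (F s)) (h : ∀ s, μ (E s) = ν (F s)) (b : Fin N → Prop) :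
    μ {x | hitPattern E x = b} = ν {y | hitPattern F y = b} := by
  induction N with
  | zero => simpa [Subsingleton.elim _ b] using huniv
  | succ N ih =>
    have htail := ih (hE.comp Fin.strictMono_succ.monotone)
      (hF.comp Fin.strictMono_succ.monotone) (fun s => hEm s.succ) (fun s => hFm s.succ)
      (fun s => h s.succ) (Fin.tail b)
    have hhead : μ {x | x ∈ E 0 ∧ ∀ s, Fin.tail b s} = ν {y | y ∈ F 0 ∧ ∀ s, Fin.tail b s} := by
      by_cases hb : ∀ s, Fin.tail b s <;> simp [hb, h 0]
    -- A point of `E 0` lies in every `E s`, so a true head forces the whole pattern to be true.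
    by_cases hb0 : b 0
    · rwa [setOf_hitPattern_eq_of_head hE hb0, setOf_hitPattern_eq_of_head hF hb0]
    · rw [setOf_hitPattern_eq_of_not_head hE hb0, setOf_hitPattern_eq_of_not_head hF hb0,
        measure_sdiff (setOf_head_subset hE _)
          ((hEm 0).inter (.const _)).nullMeasurableSet (measure_ne_top _ _),
        measure_sdiff (setOf_head_subset hF _)
          ((hFm 0).inter (.const _)).nullMeasurableSet (measure_ne_top _ _),
        htail, hhead]

theorem map_hitPattern_eq {μ : Measure α} {ν : Measure β} [IsFiniteMeasure μ]
    [IsFiniteMeasure ν] (huniv : μ Set.univ = ν Set.univ) {N : ℕ} {E : Fin N → Set α}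
    {F : Fin N → Set β} (hE : Monotone E) (hF : Monotone F) (hEm : ∀ s, MeasurableSet (E s))
    (hFm : ∀ s, MeasurableSet (F s)) (h : ∀ s, μ (E s) = ν (F s)) :
    μ.map (hitPattern E) = ν.map (hitPattern F) := by
  refine Measure.ext_iff_singleton.2 fun b => ?_
  rw [Measure.map_apply (measurable_hitPattern hEm) (measurableSet_singleton b),
    Measure.map_apply (measurable_hitPattern hFm) (measurableSet_singleton b)]
  exact measure_hitPattern_eq huniv hE hF hEm hFm h b

end NestedEvents

lemma map_pi_pi {ι κ α γ : Type*} [Fintype ι] [Fintype κ] [MeasurableSpace α] [MeasurableSpace γ]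
    (μ : ι → κ → Measure α) [∀ i k, IsFiniteMeasure (μ i k)]
    {f : ι → κ → α → γ} (hf : ∀ i k, Measurable (f i k)) :
    (Measure.pi fun i => Measure.pi (μ i)).map (fun x i k => f i k (x i k)) =
      Measure.pi fun i => Measure.pi fun k => (μ i k).map (f i k) := by
  rw [Measure.pi_map_pi (μ := fun i => Measure.pi (μ i)) (f := fun i x k => f i k (x k))
    fun i => (measurable_pi_lambda _ fun k => (hf i k).comp (measurable_pi_apply k)).aemeasurable]
  congr with i : 1
  exact Measure.pi_map_pi fun k => (hf i k).aemeasurable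

section LiveEdge

variable {γ : Type*} [Fintype γ] [MeasurableSpace γ] [MeasurableSingletonClass γ]

noncomputable def liveEdgeMeasure (p : γ → ℝ) : Measure γ :=
  ∑ j, (p j).toNNReal • Measure.dirac j

instance (p : γ → ℝ) : IsFiniteMeasure (liveEdgeMeasure p) := by
  unfold liveEdgeMeasure; infer_instance

lemma liveEdgeMeasure_apply {p : γ → ℝ} (hp : ∀ j, 0 ≤ p j) (A : Finset γ) :
    liveEdgeMeasure p A = ENNReal.ofReal (∑ j ∈ A, p j) := by
  classical
  rw [ENNReal.ofReal_sum_of_nonneg fun j _ => hp j, liveEdgeMeasure, Measure.finsetSum_apply,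
    ← Finset.sum_subset (Finset.subset_univ A)]
  · refine Finset.sum_congr rfl fun j hj => ?_
    simp [Measure.dirac_apply_of_mem (Finset.mem_coe.2 hj), ENNReal.ofReal]
  · intro j _ hj
    simp [Measure.dirac_apply' j A.measurableSet, hj]

end LiveEdge

lemma integral_card_eq_sum_measureReal {Ω ι : Type*} [MeasurableSpace Ω] [Fintype ι]
    (ν : Measure Ω) [IsFiniteMeasure ν] (F : Ω → Finset ι)
    (hF : ∀ i, MeasurableSet {x | i ∈ F x}) :
    ∫ x, ((F x).card : ℝ) ∂ν = ∑ i, ν.real {x | i ∈ F x} := by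
  classical
  have hcard (x : Ω) : ((F x).card : ℝ) = ∑ i, {x | i ∈ F x}.indicator 1 x := by
    simp [Set.indicator_apply]
  simp_rw [hcard]
  rw [integral_finsetSum _ fun i _ => (integrable_const 1).indicator (hF i)]
  exact Finset.sum_congr rfl fun i _ => integral_indicator_one (hF i)

section Orbit

variable {α : Type*} (f : α → α) (x : α) {N : ℕ}

lemma iterate_fin_eq_iff (T : Fin (N + 1) → α) :
    (fun t : Fin (N + 1) => f^[t] x) = T ↔
      T 0 = x ∧ ∀ s : Fin N, f (T s.castSucc) = T s.succ := by
  constructor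
  · rintro rfl
    exact ⟨rfl, fun s => (Function.iterate_succ_apply' f s x).symm⟩
  · rintro ⟨h0, hstep⟩
    funext t
    induction t using Fin.induction with
    | zero => exact h0.symm
    | succ s ih => rw [Fin.val_succ, Function.iterate_succ_apply', ← hstep, ← ih]; rfl

lemma monotone_iterate_fin [Preorder α] (hf : id ≤ f) :
    Monotone fun t : Fin (N + 1) => f^[t] x :=
  fun _ _ hst => Function.monotone_iterate_of_id_le hf hst x

end Orbit

def Protocol.Fires {ι : Type*} : Protocol → (ι → Prop) → Prop
  | .OR, a => ∃ k, a k
  | .AND, a => ∀ k, a k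

lemma Protocol.fires_iff {ι : Type*} (p : Protocol) (a : ι → Prop) :
    p.Fires a ↔ (p = .OR ∧ ∃ k, a k) ∨ (p = .AND ∧ ∀ k, a k) := by
  cases p <;> simp [Protocol.Fires]

section Dynamics

variable {n m : ℕ} (w : Fin m → Fin n → Fin n → ℝ) (u : Fin n → Protocol)
  (S₀ : Finset (Fin n))

lemma mem_ltmStep (μ : Fin n → Fin m → ℝ) (A : Finset (Fin n)) (i : Fin n) :
    i ∈ ltmStep w u μ A ↔ i ∈ A ∨ (u i).Fires fun k => μ i k < ∑ j ∈ A, w k i j := by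
  simp [ltmStep, Protocol.fires_iff]

lemma mem_lemStep (σ : Fin n → Fin m → Fin n) (A : Finset (Fin n)) (i : Fin n) :
    i ∈ lemStep S₀ u σ A ↔ i ∈ S₀ ∨ i ∈ A ∨ (u i).Fires fun k => σ i k ∈ A := by
  simp [lemStep, Protocol.fires_iff]

noncomputable def ltmTraj (μ : Fin n → Fin m → ℝ) : Fin (n + 1) → Finset (Fin n) :=
  fun t => (ltmStep w u μ)^[t] S₀

def lemTraj (S₀ : Finset (Fin n)) (u : Fin n → Protocol) (σ : Fin n → Fin m → Fin n) :
    Fin (n + 1) → Finset (Fin n) :=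
  fun t => (lemStep S₀ u σ)^[t] S₀

lemma monotone_ltmTraj (μ : Fin n → Fin m → ℝ) : Monotone (ltmTraj w u S₀ μ) :=
  monotone_iterate_fin _ _ fun _ => Finset.subset_union_left

lemma monotone_lemTraj (σ : Fin n → Fin m → Fin n) : Monotone (lemTraj S₀ u σ) :=
  monotone_iterate_fin _ _ fun A i hi => (mem_lemStep u S₀ σ A i).2 (.inr (.inl hi))

def generatingPatterns (T : Fin (n + 1) → Finset (Fin n)) :
    Set (Fin n → Fin m → Fin (n + 1) → Prop) :=
  {B | T 0 = S₀ ∧ ∀ (s : Fin n) i,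
    i ∈ T s.succ ↔ i ∈ T s.castSucc ∨ (u i).Fires fun k => B i k s.castSucc}

def ltmPattern (T : Fin (n + 1) → Finset (Fin n)) (μ : Fin n → Fin m → ℝ) :
    Fin n → Fin m → Fin (n + 1) → Prop :=
  fun i k => hitPattern (fun s => Set.Iio (∑ j ∈ T s, w k i j)) (μ i k)

def lemPattern (T : Fin (n + 1) → Finset (Fin n)) (σ : Fin n → Fin m → Fin n) :
    Fin n → Fin m → Fin (n + 1) → Prop :=
  fun i k => hitPattern (fun s => (T s : Set (Fin n))) (σ i k)

lemma ltmTraj_eq_iff (T : Fin (n + 1) → Finset (Fin n)) (μ : Fin n → Fin m → ℝ) :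
    ltmTraj w u S₀ μ = T ↔ ltmPattern w T μ ∈ generatingPatterns u S₀ T := by
  unfold ltmTraj
  rw [iterate_fin_eq_iff]
  refine and_congr_right fun _ => forall_congr' fun s => ?_
  simp only [Finset.ext_iff, mem_ltmStep, ltmPattern, hitPattern, Set.mem_Iio]
  exact forall_congr' fun i => Iff.comm

lemma lemTraj_eq_iff {T : Fin (n + 1) → Finset (Fin n)} (hT : Monotone T)
    (σ : Fin n → Fin m → Fin n) :
    lemTraj S₀ u σ = T ↔ lemPattern T σ ∈ generatingPatterns u S₀ T := by
  unfold lemTraj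
  rw [iterate_fin_eq_iff]
  refine and_congr_right fun h0 => forall_congr' fun s => ?_
  simp only [Finset.ext_iff, mem_lemStep, lemPattern, hitPattern, Finset.mem_coe]
  refine forall_congr' fun i => ?_
  have hS₀ : i ∈ S₀ → i ∈ T s.castSucc := fun hi => hT (Fin.zero_le _) (h0 ▸ hi)
  rw [or_iff_right_of_imp fun hi => .inl (hS₀ hi)]
  exact Iff.comm

end Dynamics

instance (n m : ℕ) : IsFiniteMeasure (thMeasure n m) := by
  unfold thMeasure; infer_instance

section Law

variable {n m : ℕ} (w : Fin m → Fin n → Fin n → ℝ)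

noncomputable def lemMeasure : Measure (Fin n → Fin m → Fin n) :=
  Measure.pi fun i => Measure.pi fun k => liveEdgeMeasure (w k i)

lemma lemMeasure_apply (hw0 : ∀ k i j, 0 ≤ w k i j) (P : (Fin n → Fin m → Fin n) → Prop)
    [DecidablePred P] :
    lemMeasure w {σ | P σ} =
      ENNReal.ofReal (∑ σ, if P σ then ∏ a, ∏ k, w k a (σ a k) else 0) := by
  have hP : {σ | P σ} = ↑(Finset.univ.filter P) := by ext; simp
  have hprod (σ : Fin n → Fin m → Fin n) (a : Fin n) : 0 ≤ ∏ k, w k a (σ a k) :=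
    Finset.prod_nonneg fun k _ => hw0 _ _ _
  rw [hP, ← sum_measure_singleton, ← Finset.sum_filter,
    ENNReal.ofReal_sum_of_nonneg fun σ _ => Finset.prod_nonneg fun a _ => hprod σ a]
  refine Finset.sum_congr rfl fun σ _ => ?_
  rw [lemMeasure, Measure.pi_singleton, ENNReal.ofReal_prod_of_nonneg fun a _ => hprod σ a]
  refine Finset.prod_congr rfl fun a _ => ?_
  rw [Measure.pi_singleton, ENNReal.ofReal_prod_of_nonneg fun k _ => hw0 _ _ _]
  refine Finset.prod_congr rfl fun k _ => ?_
  simpa using liveEdgeMeasure_apply (hw0 k a) {σ a k}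

lemma map_ltmPattern_eq (hw0 : ∀ k i j, 0 ≤ w k i j) (hw1 : ∀ k i, ∑ j, w k i j = 1)
    {T : Fin (n + 1) → Finset (Fin n)} (hT : Monotone T) :
    (thMeasure n m).map (ltmPattern w T) = (lemMeasure w).map (lemPattern T) := by
  unfold thMeasure lemMeasure ltmPattern lemPattern
  rw [map_pi_pi _ fun i k => measurable_hitPattern fun _ => measurableSet_Iio,
    map_pi_pi _ fun i k => measurable_of_countable _]
  refine congrArg Measure.pi (funext fun i => congrArg Measure.pi (funext fun k => ?_))
  have hsum_le (s : Fin (n + 1)) : ∑ j ∈ T s, w k i j ≤ 1 :=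
    hw1 k i ▸ Finset.sum_le_sum_of_subset_of_nonneg (Finset.subset_univ _) fun j _ _ => hw0 k i j
  refine map_hitPattern_eq ?_ ?_ ?_ (fun _ => measurableSet_Iio) (fun s => (T s).measurableSet)
    fun s => ?_
  · rw [← Finset.coe_univ (α := Fin n), liveEdgeMeasure_apply (hw0 k i), hw1,
      Measure.restrict_apply_univ]
    simp
  · exact fun s t hst => Set.Iio_subset_Iio <|
      Finset.sum_le_sum_of_subset_of_nonneg (hT hst) fun j _ _ => hw0 k i j
  · exact fun s t hst => Finset.coe_subset.2 (hT hst)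
  · have hIco :
        Set.Iio (∑ j ∈ T s, w k i j) ∩ Set.Icc 0 1 = Set.Ico 0 (∑ j ∈ T s, w k i j) := by
      ext x
      simp only [Set.mem_inter_iff, Set.mem_Iio, Set.mem_Icc, Set.mem_Ico]
      constructor
      · exact fun h => ⟨h.2.1, h.1⟩
      · exact fun h => ⟨h.2, h.1, h.2.le.trans (hsum_le s)⟩
    rw [liveEdgeMeasure_apply (hw0 k i), Measure.restrict_apply measurableSet_Iio, hIco,
      Real.volume_Ico, sub_zero]

variable (u : Fin n → Protocol) (S₀ : Finset (Fin n))

lemma measurable_ltmPattern (T : Fin (n + 1) → Finset (Fin n)) : Measurable (ltmPattern w T) :=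
  measurable_pi_lambda _ fun i => measurable_pi_lambda _ fun k =>
    (measurable_hitPattern fun _ => measurableSet_Iio).comp
      ((measurable_pi_apply k).comp (measurable_pi_apply i))

lemma ltmTraj_preimage_singleton (T : Fin (n + 1) → Finset (Fin n)) :
    ltmTraj w u S₀ ⁻¹' {T} = ltmPattern w T ⁻¹' generatingPatterns u S₀ T :=
  Set.ext fun μ => ltmTraj_eq_iff w u S₀ T μ

lemma lemTraj_preimage_singleton {T : Fin (n + 1) → Finset (Fin n)} (hT : Monotone T) :
    lemTraj (m := m) S₀ u ⁻¹' {T} = lemPattern T ⁻¹' generatingPatterns u S₀ T :=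
  Set.ext fun σ => lemTraj_eq_iff u S₀ hT σ

lemma measurable_ltmTraj : Measurable (ltmTraj w u S₀) :=
  measurable_to_countable' fun T => ltmTraj_preimage_singleton w u S₀ T ▸
    measurable_ltmPattern w T (.of_discrete)

lemma measurableSet_mem_ltmSS (i : Fin n) : MeasurableSet {μ | i ∈ ltmSS w u S₀ μ} :=
  measurable_ltmTraj w u S₀
    (MeasurableSet.of_discrete (s := {T : Fin (n + 1) → Finset (Fin n) | i ∈ T (Fin.last n)}))

theorem map_ltmTraj_eq_map_lemTraj (hw0 : ∀ k i j, 0 ≤ w k i j)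
    (hw1 : ∀ k i, ∑ j, w k i j = 1) :
    (thMeasure n m).map (ltmTraj w u S₀) = (lemMeasure w).map (lemTraj S₀ u) := by
  refine Measure.ext_iff_singleton.2 fun T => ?_
  rw [Measure.map_apply (measurable_ltmTraj w u S₀) (measurableSet_singleton T),
    Measure.map_apply (measurable_of_countable _) (measurableSet_singleton T)]
  by_cases hT : Monotone T
  · rw [ltmTraj_preimage_singleton, lemTraj_preimage_singleton u S₀ hT,
      ← Measure.map_apply (measurable_ltmPattern w T) .of_discrete,
      ← Measure.map_apply (measurable_of_countable _) .of_discrete,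
      map_ltmPattern_eq w hw0 hw1 hT]
  · rw [Set.preimage_singleton_eq_empty.2 ?_, Set.preimage_singleton_eq_empty.2 ?_,
      measure_empty, measure_empty]
    · rintro ⟨σ, rfl⟩
      exact hT (monotone_lemTraj u S₀ σ)
    · rintro ⟨μ, rfl⟩
      exact hT (monotone_ltmTraj w u S₀ μ)

lemma pLTM_eq_rProb (hw0 : ∀ k i j, 0 ≤ w k i j) (hw1 : ∀ k i, ∑ j, w k i j = 1) (i : Fin n) :
    pLTM w u S₀ i = rProb w S₀ u i := by
  have hlaw :=
    congrArg (· {T | i ∈ T (Fin.last n)}) (map_ltmTraj_eq_map_lemTraj w u S₀ hw0 hw1)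
  simp only [Measure.map_apply (measurable_ltmTraj w u S₀) .of_discrete,
    Measure.map_apply (measurable_of_countable (lemTraj S₀ u)) .of_discrete] at hlaw
  have hr : 0 ≤ rProb w S₀ u i := Finset.sum_nonneg fun σ _ => by
    split_ifs
    exacts [Finset.prod_nonneg fun a _ => Finset.prod_nonneg fun k _ => hw0 _ _ _, le_rfl]
  rw [pLTM, ← ENNReal.toReal_ofReal hr, rProb, ← lemMeasure_apply w hw0]
  exact congrArg ENNReal.toReal hlaw

end Law

/-- the multiplex influence spread (expected size of the steady-state
active set of the LTM) equals the sum over agents of the LEM `U`-reachability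
probabilities; in particular, the multiplex cascade centrality of agent `j`
(`S₀ = {j}`) equals `∑ i, r i`. -/
theorem influence_spread_eq_sum_reach {n m : ℕ} (w : Fin m → Fin n → Fin n → ℝ)
    (hw0 : ∀ k i j, 0 ≤ w k i j) (hw1 : ∀ k i, ∑ j : Fin n, w k i j = 1)
    (u : Fin n → Protocol) (S₀ : Finset (Fin n)) :
    (∫ μ, ((ltmSS w u S₀ μ).card : ℝ) ∂(thMeasure n m) =
      ∑ i : Fin n, rProb w S₀ u i) ∧
    (∀ j : Fin n,
      casCen w u j = ∑ i : Fin n, rProb w {j} u i) := by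
  have hreach (S : Finset (Fin n)) (i : Fin n) : pLTM w u S i = rProb w S u i :=
    pLTM_eq_rProb w u S hw0 hw1 i
  refine ⟨?_, fun j => Finset.sum_congr rfl fun i _ => hreach {j} i⟩
  rw [integral_card_eq_sum_measureReal _ _ (measurableSet_mem_ltmSS w u S₀)]
  exact Finset.sum_congr rfl fun i _ => hreach S₀ i
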